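/- Let H be a 3-uniform hypergraph on n vertices with minimum positive co-degree greater than n/3. Then H contains a copy of K_4^{3-}. -/
import Mathlib

open Finset

private lemma edge_struct {n : ℕ} (f : Finset (Fin n)) (hf : f.card = 3)
    {a b : Fin n} (ha : a ∈ f) (hb : b ∈ f) (hab : a ≠ b) :
    ∃ d, d ≠ a ∧ d ≠ b ∧ f = {a, b, d} := by
  have hsub : ({a, b} : Finset (Fin n)) ⊆ f := by
    intro x hx; simp only [mem_insert, mem_singleton] at hx
    rcases hx with h | h <;> subst h <;> assumption
  have hcard2 : ({a, b} : Finset (Fin n)).card = 2 := by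
    rw [card_insert_of_notMem (by simp [hab]), card_singleton]
  have h1 : (f \ {a, b}).card = 1 := by
    rw [card_sdiff_of_subset hsub, hf, hcard2]
  obtain ⟨d, hd⟩ := card_eq_one.mp h1
  have hdm : d ∈ f \ ({a, b} : Finset (Fin n)) := by rw [hd]; simp
  rw [mem_sdiff, mem_insert, mem_singleton] at hdm
  push_neg at hdm
  refine ⟨d, hdm.2.1, hdm.2.2, ?_⟩
  have hsub2 : ({a, b, d} : Finset (Fin n)) ⊆ f := by
    intro x hx; simp only [mem_insert, mem_singleton] at hx
    rcases hx with h | h | h <;> subst h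
    exacts [ha, hb, hdm.1]
  have hcard3 : ({a, b, d} : Finset (Fin n)).card = 3 := by
    rw [card_insert_of_notMem (by simp [hab, Ne.symm hdm.2.1]),
        card_insert_of_notMem (by simp [Ne.symm hdm.2.2]), card_singleton]
  exact (eq_of_subset_of_card_le hsub2 (by rw [hf, hcard3])).symm

private lemma link_card {n : ℕ} (H : Finset (Finset (Fin n)))
    (huniform : ∀ e ∈ H, e.card = 3) {a b : Fin n} (hab : a ≠ b) :
    (Finset.univ.filter
        (fun d => d ≠ a ∧ d ≠ b ∧ ({a, b, d} : Finset (Fin n)) ∈ H)).card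
      = (H.filter (fun e => a ∈ e ∧ b ∈ e)).card := by
  apply card_bij (fun d _ => ({a, b, d} : Finset (Fin n)))
  · intro d hd
    simp only [mem_filter, mem_univ, true_and] at hd ⊢
    exact ⟨hd.2.2, by simp, by simp⟩
  · intro d hd d' hd' heq
    simp only [mem_filter, mem_univ, true_and] at hd hd'
    have hmem : d ∈ ({a, b, d'} : Finset (Fin n)) := heq ▸ (by simp)
    simp only [mem_insert, mem_singleton] at hmem
    rcases hmem with h | h | h
    · exact absurd h hd.1
    · exact absurd h hd.2.1
    · exact h
  · intro f hf
    simp only [mem_filter] at hf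
    obtain ⟨d, hda, hdb, hfd⟩ := edge_struct f (huniform f hf.1) hf.2.1 hf.2.2 hab
    refine ⟨d, ?_, hfd.symm⟩
    simp only [mem_filter, mem_univ, true_and]
    exact ⟨hda, hdb, hfd ▸ hf.1⟩

private lemma found {n : ℕ} (H : Finset (Finset (Fin n))) {a b c d : Fin n}
    (hab : a ≠ b) (hac : a ≠ c) (had : a ≠ d) (hbc : b ≠ c) (hbd : b ≠ d)
    (hcd : c ≠ d)
    (h1 : ({a, b, c} : Finset (Fin n)) ∈ H)
    (h2 : ({a, b, d} : Finset (Fin n)) ∈ H)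
    (h3 : ({a, c, d} : Finset (Fin n)) ∈ H) :
    ∃ a b c d : Fin n, ({a, b, c, d} : Finset (Fin n)).card = 4 ∧
      ({a, b, c} : Finset (Fin n)) ∈ H ∧ ({a, b, d} : Finset (Fin n)) ∈ H ∧
      ({a, c, d} : Finset (Fin n)) ∈ H := by
  refine ⟨a, b, c, d, ?_, h1, h2, h3⟩
  rw [card_insert_of_notMem (by simp [hab, hac, had]),
      card_insert_of_notMem (by simp [hbc, hbd]),
      card_insert_of_notMem (by simp [hcd]), card_singleton]

/-- A 3-graph on `n` vertices with minimum positive co-degree greater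
than `n/3` contains a copy of `K_4^{3-}` (vertices `a,b,c,d` with edges
`abc, abd, acd`). -/
theorem stmt_15 (n : ℕ) (H : Finset (Finset (Fin n)))
    (huniform : ∀ e ∈ H, e.card = 3) (hne : H.Nonempty)
    (hcodeg : ∀ x y : Fin n, x ≠ y → (∃ e ∈ H, x ∈ e ∧ y ∈ e) →
      (n : ℝ) / 3 < ((H.filter (fun e => x ∈ e ∧ y ∈ e)).card : ℝ)) :
    ∃ a b c d : Fin n, ({a, b, c, d} : Finset (Fin n)).card = 4 ∧
      ({a, b, c} : Finset (Fin n)) ∈ H ∧ ({a, b, d} : Finset (Fin n)) ∈ H ∧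
      ({a, c, d} : Finset (Fin n)) ∈ H := by
  obtain ⟨e, he⟩ := hne
  obtain ⟨a, b, c, hab, hac, hbc, hebc⟩ := Finset.card_eq_three.mp (huniform e he)
  subst hebc
  have habc : ({a, b, c} : Finset (Fin n)) ∈ H := he
  have hn3 : 3 ≤ n := by
    have h := card_le_card (subset_univ ({a, b, c} : Finset (Fin n)))
    rw [huniform _ habc, card_univ, Fintype.card_fin] at h
    exact h
  -- set equalities
  have eacb : ({a, c, b} : Finset (Fin n)) = {a, b, c} := by ext x; simp; tauto
  have ebca : ({b, c, a} : Finset (Fin n)) = {a, b, c} := by ext x; simp; tauto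
  have ebac : ({b, a, c} : Finset (Fin n)) = {a, b, c} := by ext x; simp; tauto
  have ecab : ({c, a, b} : Finset (Fin n)) = {a, b, c} := by ext x; simp; tauto
  -- the link sets
  set Sab := Finset.univ.filter
    (fun d => d ≠ a ∧ d ≠ b ∧ ({a, b, d} : Finset (Fin n)) ∈ H) with hSab
  set Sac := Finset.univ.filter
    (fun d => d ≠ a ∧ d ≠ c ∧ ({a, c, d} : Finset (Fin n)) ∈ H) with hSac
  set Sbc := Finset.univ.filter
    (fun d => d ≠ b ∧ d ≠ c ∧ ({b, c, d} : Finset (Fin n)) ∈ H) with hSbc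
  have key : ∀ (x y : Fin n) (hxy : x ≠ y), (∃ e ∈ H, x ∈ e ∧ y ∈ e) →
      (n : ℝ) / 3 < ((Finset.univ.filter
        (fun d => d ≠ x ∧ d ≠ y ∧ ({x, y, d} : Finset (Fin n)) ∈ H)).card : ℝ) := by
    intro x y hxy hex
    rw [link_card H huniform hxy]
    exact hcodeg x y hxy hex
  have hSabc : c ∈ Sab := by
    simp only [hSab, mem_filter, mem_univ, true_and]
    exact ⟨Ne.symm hac, Ne.symm hbc, habc⟩
  have hSacb : b ∈ Sac := by
    simp only [hSac, mem_filter, mem_univ, true_and]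
    exact ⟨Ne.symm hab, hbc, eacb ▸ habc⟩
  have hSbca : a ∈ Sbc := by
    simp only [hSbc, mem_filter, mem_univ, true_and]
    exact ⟨hab, hac, ebca ▸ habc⟩
  have h1 : (n : ℝ) / 3 < Sab.card :=
    key a b hab ⟨{a, b, c}, habc, by simp, by simp⟩
  have h2 : (n : ℝ) / 3 < Sac.card :=
    key a c hac ⟨{a, b, c}, habc, by simp, by simp⟩
  have h3 : (n : ℝ) / 3 < Sbc.card :=
    key b c hbc ⟨{a, b, c}, habc, by simp, by simp⟩
  set A := Sab.erase c with hA
  set B := Sac.erase b with hB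
  set C := Sbc.erase a with hC
  have hcA : ((A.card : ℝ)) + 1 = Sab.card := by
    rw [hA]; exact_mod_cast congrArg (Nat.cast : ℕ → ℝ) (card_erase_add_one hSabc)
  have hcB : ((B.card : ℝ)) + 1 = Sac.card := by
    rw [hB]; exact_mod_cast congrArg (Nat.cast : ℕ → ℝ) (card_erase_add_one hSacb)
  have hcC : ((C.card : ℝ)) + 1 = Sbc.card := by
    rw [hC]; exact_mod_cast congrArg (Nat.cast : ℕ → ℝ) (card_erase_add_one hSbca)
  by_cases hAB : (A ∩ B).Nonempty
  · obtain ⟨d, hd⟩ := hAB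
    simp only [hA, hB, hSab, hSac, mem_inter, mem_erase, mem_filter, mem_univ,
      true_and] at hd
    exact found H hab hac (Ne.symm hd.1.2.1) hbc (Ne.symm hd.1.2.2.1)
      (Ne.symm hd.1.1) habc hd.1.2.2.2 hd.2.2.2.2
  by_cases hAC : (A ∩ C).Nonempty
  · obtain ⟨d, hd⟩ := hAC
    simp only [hA, hC, hSab, hSbc, mem_inter, mem_erase, mem_filter, mem_univ,
      true_and] at hd
    -- edges abc, abd, bcd ; use (b, a, c, d)
    refine found H (Ne.symm hab) hbc (Ne.symm hd.1.2.2.1) hac (Ne.symm hd.1.2.1)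
      (Ne.symm hd.1.1) (ebac ▸ habc) ?_ hd.2.2.2.2
    have : ({b, a, d} : Finset (Fin n)) = {a, b, d} := by ext x; simp; tauto
    rw [this]; exact hd.1.2.2.2
  by_cases hBC : (B ∩ C).Nonempty
  · obtain ⟨d, hd⟩ := hBC
    simp only [hB, hC, hSac, hSbc, mem_inter, mem_erase, mem_filter, mem_univ,
      true_and] at hd
    -- edges abc, acd, bcd ; use (c, a, b, d)
    refine found H (Ne.symm hac) (Ne.symm hbc) (Ne.symm hd.1.2.2.1)
      hab (Ne.symm hd.1.2.1) (Ne.symm hd.1.1) (ecab ▸ habc) ?_ ?_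
    · have : ({c, a, d} : Finset (Fin n)) = {a, c, d} := by ext x; simp; tauto
      rw [this]; exact hd.1.2.2.2
    · have : ({c, b, d} : Finset (Fin n)) = {b, c, d} := by ext x; simp; tauto
      rw [this]; exact hd.2.2.2.2
  exfalso
  have dAB : Disjoint A B := by
    rw [not_nonempty_iff_eq_empty] at hAB
    exact disjoint_iff_inter_eq_empty.mpr hAB
  have dAC : Disjoint A C := by
    rw [not_nonempty_iff_eq_empty] at hAC
    exact disjoint_iff_inter_eq_empty.mpr hAC
  have dBC : Disjoint B C := by
    rw [not_nonempty_iff_eq_empty] at hBC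
    exact disjoint_iff_inter_eq_empty.mpr hBC
  have hcardU : (A ∪ B ∪ C).card = A.card + B.card + C.card := by
    rw [card_union_of_disjoint (disjoint_union_left.mpr ⟨dAC, dBC⟩),
      card_union_of_disjoint dAB]
  have hsub : A ∪ B ∪ C ⊆ Finset.univ \ {a, b, c} := by
    intro x hx
    simp only [hA, hB, hC, hSab, hSac, hSbc, mem_union, mem_erase, mem_filter,
      mem_univ, true_and] at hx
    simp only [mem_sdiff, mem_univ, true_and, mem_insert, mem_singleton]
    push_neg
    tauto
  have hle : (A ∪ B ∪ C).card ≤ n - 3 := by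
    have := card_le_card hsub
    rwa [card_sdiff_of_subset (subset_univ _), card_univ, Fintype.card_fin,
      huniform _ habc] at this
  rw [hcardU] at hle
  have hle' : ((A.card + B.card + C.card : ℕ) : ℝ) ≤ (n : ℝ) - 3 := by
    rw [show ((n : ℝ) - 3) = ((n - 3 : ℕ) : ℝ) by
      rw [Nat.cast_sub hn3]; norm_num]
    exact_mod_cast hle
  push_cast at hle'
  linarith
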